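/- (Holonomy Theorem, left action) Let S be a finite semigroup generated by a finite alphabet A, T^1 = KR_right(S,A)^1, and (𝒞, [0,1]) the Chiswell rooted tree built from the Lyndon–Chiswell length function D. Then the map ε sending α ∈ T^1 to the function ε_α on the vertices of 𝒞 given by ε_α([k,β]) = [k,αβ] is well-defined (independent of representatives), each ε_α is an elliptic map of (𝒞,[0,1]) (it preserves the depth of every vertex and maps edges to edges), ε is a monoid homomorphism (ε_{αα'} = ε_α ∘ ε_{α'} and ε_1 = id), and ε is injective. Hence T^1 = KR^1_right(S,A) is faithfully represented as elliptic maps on a finite rooted tree. -/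

import Mathlib

open scoped Classical

namespace KRHolonomy

/-- Green's quasi-order `≤_J` on a monoid: `a ≤_J b` iff `a ∈ M b M`. -/
def leJ {M : Type*} [Monoid M] (a b : M) : Prop := ∃ x y : M, a = x * b * y

/-- `a <_J b` iff `a ≤_J b` and not `b ≤_J a`. -/
def ltJ {M : Type*} [Monoid M] (a b : M) : Prop := leJ a b ∧ ¬ leJ b a

/-- Green's quasi-order `≤_R` on a monoid: `a ≤_R b` iff `a ∈ b M`. -/
def leR {M : Type*} [Monoid M] (a b : M) : Prop := ∃ x : M, a = b * x

/-- `a <_R b` iff `a ≤_R b` and not `b ≤_R a`. -/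
def ltR {M : Type*} [Monoid M] (a b : M) : Prop := leR a b ∧ ¬ leR b a

/-- Green's quasi-order `≤_L` on a monoid: `a ≤_L b` iff `a ∈ M b`. -/
def leL {M : Type*} [Monoid M] (a b : M) : Prop := ∃ x : M, a = x * b

/-- `a <_L b` iff `a ≤_L b` and not `b ≤_L a`. -/
def ltL {M : Type*} [Monoid M] (a b : M) : Prop := leL a b ∧ ¬ leL b a

/-- The Dedekind height function: `height x` is the largest `k` such that there is a chain
`x₀ >_J x₁ >_J ⋯ >_J x_k = x`. -/
noncomputable def height {M : Type*} [Monoid M] (x : M) : ℕ :=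
  sSup {k | ∃ c : ℕ → M, c k = x ∧ ∀ i < k, ltJ (c (i + 1)) (c i)}

variable {A S : Type*} [Semigroup S]

/-- The edge `(s, a, s·θ(a))` of the right Cayley graph of `(S,A)` is a transition edge:
there is no path in the right Cayley graph from `s·θ(a)` back to `s`. -/
def IsTransitionEdge (θ : FreeMonoid A →* WithOne S) (s : WithOne S) (a : A) : Prop :=
  ¬ ∃ w : FreeMonoid A, s * θ (FreeMonoid.of a) * θ w = s

/-- The (ordered) sequence of transition edges along the path of the right Cayley graph
starting at `s` and reading the word `u`; an edge is recorded as a pair (source, label). -/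
noncomputable def transEdgesFrom (θ : FreeMonoid A →* WithOne S) :
    WithOne S → List A → List (WithOne S × A)
  | _, [] => []
  | s, a :: w =>
      (if IsTransitionEdge θ s a then [(s, a)] else []) ++
        transEdgesFrom θ (s * θ (FreeMonoid.of a)) w

/-- The sequence of transition edges of the path starting at `1` reading `u`. -/
noncomputable def transEdges (θ : FreeMonoid A →* WithOne S) (u : FreeMonoid A) :
    List (WithOne S × A) :=
  transEdgesFrom θ 1 (FreeMonoid.toList u)

/-- The congruence (`τ_r`, together with `(1,1)`) defining the right Karnofsky–Rhodes
expansion: two words of `A^*` represent the same element of `KR_right(S,A)¹` iff they are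
both empty or both nonempty, they have the same image in `S¹` and the same sequence of
transition edges. -/
def KRrel (θ : FreeMonoid A →* WithOne S) (u v : FreeMonoid A) : Prop :=
  (u = 1 ∧ v = 1) ∨
    (u ≠ 1 ∧ v ≠ 1 ∧ θ u = θ v ∧ transEdges θ u = transEdges θ v)

/-- Green's quasi-order `≤_J` on `T¹ = KR_right(S,A)¹`, expressed on word representatives:
`u ≤_J v` iff `u = p v q` holds in `T¹` for some `p, q ∈ T¹`. -/
def leJT (θ : FreeMonoid A →* WithOne S) (u v : FreeMonoid A) : Prop :=
  ∃ p q : FreeMonoid A, KRrel θ u (p * v * q)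

/-- `<_J` on `T¹ = KR_right(S,A)¹`, expressed on word representatives. -/
def ltJT (θ : FreeMonoid A →* WithOne S) (u v : FreeMonoid A) : Prop :=
  leJT θ u v ∧ ¬ leJT θ v u

/-- The Dedekind height function on `T¹ = KR_right(S,A)¹`, expressed on word
representatives: the largest `k` such that there is a chain
`t₀ >_J t₁ >_J ⋯ >_J t_k = t` in `T¹`. -/
noncomputable def heightT (θ : FreeMonoid A →* WithOne S) (u : FreeMonoid A) : ℕ :=
  sSup {k | ∃ c : ℕ → FreeMonoid A, KRrel θ (c k) u ∧ ∀ i < k, ltJT θ (c (i + 1)) (c i)}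

/-- `ℓ = 2 · max { h(s) : s ∈ S¹ }`. -/
noncomputable def ell (S : Type*) [Semigroup S] : ℕ :=
  2 * sSup (Set.range fun s : WithOne S => height s)

/-- `ξ(u,v)`: the largest `i` (with `0 ≤ i ≤ m`, `m` the number of transition edges of `u`)
such that the first `i` transition edges of `u` and of `v` agree. -/
noncomputable def xi (θ : FreeMonoid A →* WithOne S) (u v : FreeMonoid A) : ℕ :=
  sSup {i | i ≤ (transEdges θ u).length ∧
    (transEdges θ u).take i = (transEdges θ v).take i}

/-- The endpoint of an edge `(s, a)` of the right Cayley graph, namely `s·θ(a)`. -/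
def edgeEnd (θ : FreeMonoid A →* WithOne S) (e : WithOne S × A) : WithOne S :=
  e.1 * θ (FreeMonoid.of e.2)

/-- The Lyndon–Chiswell length function `D` on `T¹ = KR_right(S,A)¹`, expressed on word
representatives.  With `k = ξ(u,v)` (and indexing the transition edges from `1` as in the
paper, so that `E_k` sits at list index `k-1`):
`D(u,v) = ℓ` if `u = v` in `T¹`; `D(u,v) = 0` if `u ≠ v` in `T¹` and `k = 0`;
`D(u,v) = 2·h(end(E_k))` if `k > 0`, `E_{k+1}` and `E'_{k+1}` both exist and have the same
endpoint; and `D(u,v) = 2·h(end(E_k)) - 1` in all remaining cases. -/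
noncomputable def lcD (θ : FreeMonoid A →* WithOne S) (u v : FreeMonoid A) : ℕ :=
  if KRrel θ u v then ell S
  else if xi θ u v = 0 then 0
  else
    let k := xi θ u v
    let base := (transEdges θ u)[k - 1]?.elim 0 fun e => height (edgeEnd θ e)
    if ∃ e e', (transEdges θ u)[k]? = some e ∧ (transEdges θ v)[k]? = some e' ∧
        edgeEnd θ e = edgeEnd θ e'
    then 2 * base
    else 2 * base - 1

/-- The relation `∼` on `C = {(k,α) : 0 ≤ k ≤ ℓ, α ∈ T¹}`:
`(k,α) ∼ (k',β)` iff `k = k'` and `D(α,β) ≥ k`. -/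
def simRel (θ : FreeMonoid A →* WithOne S)
    (p q : {p : ℕ × FreeMonoid A // p.1 ≤ ell S}) : Prop :=
  p.val.1 = q.val.1 ∧ lcD θ p.val.2 q.val.2 ≥ p.val.1

/-- The vertex set of the Chiswell tree: `∼`-classes `[k,α]`. -/
def CVert (θ : FreeMonoid A →* WithOne S) : Type _ := Quot (simRel θ)

/-- The edge relation of the Chiswell graph: the edges are `[k,α] — [k+1,α]`
for `0 ≤ k < ℓ` and `α ∈ T¹`. -/
def edgeRel (θ : FreeMonoid A →* WithOne S) (v w : CVert θ) : Prop :=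
  ∃ (k : ℕ) (α : FreeMonoid A) (hk : k + 1 ≤ ell S),
    v = Quot.mk (simRel θ) ⟨(k, α), Nat.le_of_succ_le hk⟩ ∧
    w = Quot.mk (simRel θ) ⟨(k + 1, α), hk⟩

/-- The Chiswell graph `𝒞`. -/
def CGraph (θ : FreeMonoid A →* WithOne S) : SimpleGraph (CVert θ) :=
  SimpleGraph.fromRel (edgeRel θ)

/-- The depth function of the Chiswell tree: `δ([k,α]) = k`. -/
def depth (θ : FreeMonoid A →* WithOne S) : CVert θ → ℕ :=
  Quot.lift (fun p => p.val.1) (fun _ _ h => h.1)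

end KRHolonomy

/-!
Left multiplication `β ↦ αβ` on `T¹` induces the maps `ε_α`; everything except well-definedness
and faithfulness is bookkeeping. Well-definedness amounts to `D(β, γ) ≤ D(αβ, αγ)`. The transition
edges of `αβ` are those of `α` followed by the transition edges of `β` translated by `θ(α)` that
remain transition edges, so a common prefix of the transition edges of `β` and `γ` yields one of
`αβ` and `αγ` ending in a `J`-class at least as deep. By stability of finite monoids every
transition edge goes strictly down in the `J`-order, so heights strictly increase along the
transition edges of a path; hence if the depth does not grow, the next edges of `β` and `γ`
survive translation, which preserves the clause "equal next endpoints" of `D`. Faithfulness: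
`D(α, α') < ℓ` unless `α = α'` in `T¹`, so the vertices `[ℓ, α]` of the bottom level separate the
elements of `T¹`, and `ε_α [ℓ, 1] = [ℓ, α]`.
-/

namespace KRHolonomy

open FreeMonoid

section Green

variable {M : Type*} [Monoid M]

theorem leJ_refl (a : M) : leJ a a := ⟨1, 1, by simp⟩

theorem leJ_trans {a b c : M} (hab : leJ a b) (hbc : leJ b c) : leJ a c := by
  obtain ⟨x, y, rfl⟩ := hab
  obtain ⟨x', y', rfl⟩ := hbc
  exact ⟨x * x', y' * y, by simp only [mul_assoc]⟩

theorem leJ_mul_left (s a : M) : leJ (s * a) a := ⟨s, 1, by simp⟩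

theorem leR_refl (a : M) : leR a a := ⟨1, by simp⟩

theorem leR_trans {a b c : M} (hab : leR a b) (hbc : leR b c) : leR a c := by
  obtain ⟨x, rfl⟩ := hab
  obtain ⟨y, rfl⟩ := hbc
  exact ⟨y * x, by simp only [mul_assoc]⟩

theorem leR_mul_right (a x : M) : leR (a * x) a := ⟨x, rfl⟩

theorem leR_mul_left (s : M) {a b : M} (h : leR a b) : leR (s * a) (s * b) := by
  obtain ⟨x, rfl⟩ := h
  exact ⟨x, by simp only [mul_assoc]⟩

theorem leR.leJ {a b : M} (h : leR a b) : leJ a b := by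
  obtain ⟨x, rfl⟩ := h
  exact ⟨1, x, by simp⟩

theorem ltJ_irrefl (a : M) : ¬ ltJ a a := fun h => h.2 (leJ_refl a)

theorem ltJ_trans {a b c : M} (hab : ltJ a b) (hbc : ltJ b c) : ltJ a c :=
  ⟨leJ_trans hab.1 hbc.1, fun hca => hbc.2 (leJ_trans hca hab.1)⟩

theorem ltJ_of_ltJ_of_leJ {a b c : M} (hab : ltJ a b) (hbc : leJ b c) : ltJ a c :=
  ⟨leJ_trans hab.1 hbc, fun hca => hab.2 (leJ_trans hbc hca)⟩

theorem ltJ_of_leJ_of_ltJ {a b c : M} (hab : leJ a b) (hbc : ltJ b c) : ltJ a c :=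
  ⟨leJ_trans hab hbc.1, fun hca => hbc.2 (leJ_trans hca hab)⟩

theorem ltJ_of_chain {c : ℕ → M} {k : ℕ} (hc : ∀ i < k, ltJ (c (i + 1)) (c i))
    {i j : ℕ} (hij : i < j) (hjk : j ≤ k) : ltJ (c j) (c i) := by
  induction j, hij using Nat.le_induction with
  | base => exact hc i (by omega)
  | succ j hij ih => exact ltJ_trans (hc j (by omega)) (ih (by omega))

variable [Finite M]

theorem exists_isIdempotentElem_pow (x : M) : ∃ N, 0 < N ∧ IsIdempotentElem (x ^ N) := by
  obtain ⟨m, n, hmn, h⟩ := Set.Finite.exists_lt_map_eq_of_forall_mem (f := fun n : ℕ => x ^ n)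
    (t := Set.univ) (fun _ => trivial) Set.finite_univ
  have hstep : ∀ j, m ≤ j → x ^ (j + (n - m)) = x ^ j := fun j hj => by
    rw [show j + (n - m) = (j - m) + n by omega, pow_add, ← h, ← pow_add]
    congr 1
    omega
  have hper : ∀ t j, m ≤ j → x ^ (j + t * (n - m)) = x ^ j := by
    intro t
    induction t with
    | zero => simp
    | succ t ih =>
      intro j hj
      rw [add_mul, one_mul, ← add_assoc, hstep _ (by omega), ih j hj]
  refine ⟨(m + 1) * (n - m), Nat.mul_pos m.succ_pos (by omega), ?_⟩
  rw [IsIdempotentElem, ← pow_add]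
  exact hper (m + 1) _ ((Nat.le_mul_of_pos_right _ (by omega)).trans' m.le_succ)

/-- Stability of finite monoids. -/
theorem leR_of_leR_of_leJ {a b : M} (hab : leR a b) (hba : leJ b a) : leR b a := by
  obtain ⟨u, rfl⟩ := hab
  obtain ⟨x, y, hb⟩ := hba
  have hiter : ∀ n : ℕ, b = x ^ n * b * (u * y) ^ n := by
    intro n
    induction n with
    | zero => simp
    | succ n ih =>
      calc b = x * (b * u) * y := hb
        _ = x * (x ^ n * b * (u * y) ^ n * u) * y := by rw [← ih]
        _ = x ^ (n + 1) * b * (u * y) ^ (n + 1) := by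
          rw [pow_succ' x, pow_succ (u * y)]
          simp only [mul_assoc]
  obtain ⟨N, hN, hidem⟩ := exists_isIdempotentElem_pow x
  have hfix : x ^ N * b = b := by
    conv_lhs => rw [hiter N, ← mul_assoc, ← mul_assoc, hidem.eq, ← hiter N]
  obtain ⟨N, rfl⟩ := Nat.exists_eq_add_one_of_ne_zero hN.ne'
  refine ⟨y * (u * y) ^ N, ?_⟩
  calc b = b * (u * y) ^ (N + 1) := by conv_lhs => rw [hiter (N + 1), hfix]
    _ = b * u * (y * (u * y) ^ N) := by rw [pow_succ']; simp only [mul_assoc]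

theorem lt_card_of_chain {c : ℕ → M} {k : ℕ} (hc : ∀ i < k, ltJ (c (i + 1)) (c i)) :
    k < Nat.card M := by
  have hinj : Function.Injective fun i : Fin (k + 1) => c i := by
    intro i j hij
    by_contra hne
    rcases Fin.lt_or_lt_of_ne hne with h | h
    · exact ltJ_irrefl (c j) (by simpa [hij] using ltJ_of_chain hc h (by omega))
    · exact ltJ_irrefl (c i) (by simpa [hij] using ltJ_of_chain hc h (by omega))
  simpa using Nat.card_le_card_of_injective _ hinj

theorem bddAbove_chainLengths (x : M) :
    BddAbove {k | ∃ c : ℕ → M, c k = x ∧ ∀ i < k, ltJ (c (i + 1)) (c i)} :=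
  ⟨Nat.card M, by rintro _ ⟨_, _, hc⟩; exact (lt_card_of_chain hc).le⟩

theorem exists_chain_height (x : M) :
    ∃ c : ℕ → M, c (height x) = x ∧ ∀ i < height x, ltJ (c (i + 1)) (c i) := by
  refine Nat.sSup_mem ?_ (bddAbove_chainLengths x)
  exact ⟨0, fun _ => x, rfl, by simp⟩

theorem le_height {x : M} {c : ℕ → M} {k : ℕ} (hck : c k = x)
    (hc : ∀ i < k, ltJ (c (i + 1)) (c i)) : k ≤ height x :=
  le_csSup (bddAbove_chainLengths x) ⟨c, hck, hc⟩

theorem height_lt_card (x : M) : height x < Nat.card M :=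
  let ⟨_, _, hc⟩ := exists_chain_height x
  lt_card_of_chain hc

theorem height_le_height {x y : M} (h : leJ x y) : height y ≤ height x := by
  obtain ⟨c, hcy, hc⟩ := exists_chain_height y
  refine le_height (c := Function.update c (height y) x) (by simp) fun i hi => ?_
  rw [Function.update_of_ne (show i ≠ height y by omega)]
  by_cases hlast : i + 1 = height y
  · rw [hlast, Function.update_self]
    exact ltJ_of_leJ_of_ltJ h (hcy ▸ hlast ▸ hc i hi)
  · rw [Function.update_of_ne hlast]
    exact hc i hi

theorem height_lt_height {x y : M} (h : ltJ x y) : height y < height x := by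
  obtain ⟨c, hcy, hc⟩ := exists_chain_height y
  refine le_height (c := Function.update c (height y + 1) x) (by simp) fun i hi => ?_
  rw [Function.update_of_ne (show i ≠ height y + 1 by omega)]
  by_cases hlast : i = height y
  · rw [hlast, Function.update_self, hcy]
    exact h
  · rw [Function.update_of_ne (show i + 1 ≠ height y + 1 by omega)]
    exact hc i (by omega)

theorem height_eq_of_leR_of_leR {x y : M} (hxy : leR x y) (hyx : leR y x) :
    height x = height y :=
  le_antisymm (height_le_height hyx.leJ) (height_le_height hxy.leJ)

end Green

section WithOne

variable {S : Type*} [Semigroup S]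

instance [Finite S] : Finite (WithOne S) :=
  have := Fintype.ofFinite S
  inferInstanceAs (Finite (Option S))

theorem withOne_mul_eq_one {a b : WithOne S} (h : a * b = 1) : a = 1 ∧ b = 1 := by
  induction a using WithOne.recOneCoe <;> induction b using WithOne.recOneCoe <;>
    simp_all [← WithOne.coe_mul]

theorem one_le_height [Finite S] {x : WithOne S} (hx : x ≠ 1) : 1 ≤ height x := by
  refine le_height (c := fun i => if i = 0 then 1 else x) (by simp) fun i hi => ?_
  obtain rfl : i = 0 := by omega
  refine ⟨⟨1, x, by simp⟩, fun ⟨p, q, h⟩ => hx ?_⟩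
  exact (withOne_mul_eq_one (withOne_mul_eq_one h.symm).1).2

end WithOne

section TransitionEdges

variable {A S : Type*} [Semigroup S] (θ : FreeMonoid A →* WithOne S)

theorem transEdgesFrom_of_mul (t : WithOne S) (a : A) (w : FreeMonoid A) :
    transEdgesFrom θ t (of a * w).toList =
      (if IsTransitionEdge θ t a then [(t, a)] else []) ++
        transEdgesFrom θ (t * θ (of a)) w.toList := rfl

theorem transEdgesFrom_mul (t : WithOne S) (u v : FreeMonoid A) :
    transEdgesFrom θ t (u * v).toList =
      transEdgesFrom θ t u.toList ++ transEdgesFrom θ (t * θ u) v.toList := by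
  induction u using FreeMonoid.recOn generalizing t with
  | one => simp [transEdgesFrom]
  | of_mul a u ih =>
    rw [mul_assoc, transEdgesFrom_of_mul, transEdgesFrom_of_mul, ih, map_mul, ← mul_assoc,
      List.append_assoc]

theorem not_isTransitionEdge_mul_left (s : WithOne S) {t : WithOne S} {a : A}
    (h : ¬ IsTransitionEdge θ t a) : ¬ IsTransitionEdge θ (s * t) a := by
  simp only [IsTransitionEdge, not_not] at h ⊢
  obtain ⟨w, hw⟩ := h
  exact ⟨w, by rw [mul_assoc, mul_assoc, ← mul_assoc t, hw]⟩

theorem edgeEnd_mul_left (s : WithOne S) (e : WithOne S × A) :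
    edgeEnd θ (s * e.1, e.2) = s * edgeEnd θ e :=
  mul_assoc _ _ _

noncomputable def translateEdge (s : WithOne S) (e : WithOne S × A) : Option (WithOne S × A) :=
  if IsTransitionEdge θ (s * e.1) e.2 then some (s * e.1, e.2) else none

theorem transEdgesFrom_mul_left (s t : WithOne S) (w : FreeMonoid A) :
    transEdgesFrom θ (s * t) w.toList =
      (transEdgesFrom θ t w.toList).filterMap (translateEdge θ s) := by
  induction w using FreeMonoid.recOn generalizing t with
  | one => rfl
  | of_mul a w ih =>
    rw [transEdgesFrom_of_mul, transEdgesFrom_of_mul, List.filterMap_append, mul_assoc, ih]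
    congr 1
    by_cases h : IsTransitionEdge θ t a
    · by_cases h' : IsTransitionEdge θ (s * t) a <;> simp [h, h', translateEdge]
    · simp [h, not_isTransitionEdge_mul_left θ s h]

theorem isTransitionEdge_and_leR_of_mem {t : WithOne S} {w : FreeMonoid A} {e : WithOne S × A}
    (he : e ∈ transEdgesFrom θ t w.toList) : IsTransitionEdge θ e.1 e.2 ∧ leR e.1 t := by
  induction w using FreeMonoid.recOn generalizing t with
  | one => simp [transEdgesFrom] at he
  | of_mul a w ih =>
    rw [transEdgesFrom_of_mul, List.mem_append] at he
    rcases he with he | he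
    · split_ifs at he with h
      · obtain rfl := List.mem_singleton.1 he
        exact ⟨h, leR_refl t⟩
      · simp at he
    · obtain ⟨htr, hR⟩ := ih he
      exact ⟨htr, leR_trans hR (leR_mul_right t _)⟩

theorem leR_of_transEdgesFrom_eq_nil {t : WithOne S} {w : FreeMonoid A}
    (h : transEdgesFrom θ t w.toList = []) : leR t (t * θ w) := by
  induction w using FreeMonoid.recOn generalizing t with
  | one => exact ⟨1, by simp⟩
  | of_mul a w ih =>
    rw [transEdgesFrom_of_mul, List.append_eq_nil_iff] at h
    have hnot : ¬ IsTransitionEdge θ t a := fun htr => by simp [htr] at h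
    obtain ⟨v, hv⟩ := not_not.1 hnot
    obtain ⟨x, hx⟩ := ih h.2
    refine ⟨x * θ v, ?_⟩
    calc t = t * θ (of a) * θ v := hv.symm
      _ = t * θ (of a) * θ w * x * θ v := by rw [← hx]
      _ = t * θ (of a * w) * (x * θ v) := by simp only [map_mul, mul_assoc]

theorem leR_edgeEnd_of_getLast? {t : WithOne S} {w : FreeMonoid A} {e : WithOne S × A}
    (h : (transEdgesFrom θ t w.toList).getLast? = some e) :
    leR (t * θ w) (edgeEnd θ e) ∧ leR (edgeEnd θ e) (t * θ w) := by
  induction w using FreeMonoid.recOn generalizing t with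
  | one => simp [transEdgesFrom] at h
  | of_mul a w ih =>
    rw [map_mul, ← mul_assoc]
    rw [transEdgesFrom_of_mul] at h
    by_cases hw : transEdgesFrom θ (t * θ (of a)) w.toList = []
    · rw [hw, List.append_nil] at h
      split_ifs at h
      · obtain rfl : (t, a) = e := by simpa using h
        exact ⟨leR_mul_right _ _, leR_of_transEdgesFrom_eq_nil θ hw⟩
      · simp at h
    · exact ih (by rwa [List.getLast?_append_of_ne_nil _ hw] at h)

theorem exists_mul_eq_transEdgesFrom_take_drop (t : WithOne S) (w : FreeMonoid A) {k : ℕ}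
    (hk : k ≤ (transEdgesFrom θ t w.toList).length) :
    ∃ p q : FreeMonoid A, w = p * q ∧
      transEdgesFrom θ t p.toList = (transEdgesFrom θ t w.toList).take k ∧
      transEdgesFrom θ (t * θ p) q.toList = (transEdgesFrom θ t w.toList).drop k := by
  induction w using FreeMonoid.recOn generalizing t k with
  | one => exact ⟨1, 1, rfl, by simp [transEdgesFrom], by simp [transEdgesFrom]⟩
  | of_mul a w ih =>
    rcases k with _ | k
    · exact ⟨1, of a * w, by simp, by simp [transEdgesFrom], by simp⟩
    by_cases htr : IsTransitionEdge θ t a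
    · simp only [transEdgesFrom_of_mul, if_pos htr, List.singleton_append,
        List.length_cons] at hk ⊢
      obtain ⟨p, q, rfl, hp, hq⟩ := ih (t * θ (of a)) (k := k) (by omega)
      refine ⟨of a * p, q, by rw [mul_assoc], ?_, ?_⟩
      · rw [transEdgesFrom_of_mul, if_pos htr, hp]
        rfl
      · rw [map_mul, ← mul_assoc, hq]
        rfl
    · simp only [transEdgesFrom_of_mul, if_neg htr, List.nil_append] at hk ⊢
      obtain ⟨p, q, rfl, hp, hq⟩ := ih (t * θ (of a)) hk
      refine ⟨of a * p, q, by rw [mul_assoc], ?_, ?_⟩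
      · rw [transEdgesFrom_of_mul, if_neg htr, hp]
        rfl
      · rw [map_mul, ← mul_assoc, hq]

end TransitionEdges

section PathHeights

variable {A S : Type*} [Semigroup S] [Finite S] (θ : FreeMonoid A →* WithOne S)

theorem ltJ_edgeEnd (hθ : Function.Surjective θ) {e : WithOne S × A}
    (he : IsTransitionEdge θ e.1 e.2) : ltJ (edgeEnd θ e) e.1 := by
  refine ⟨(leR_mul_right _ _).leJ, fun hle => ?_⟩
  obtain ⟨x, hx⟩ := leR_of_leR_of_leJ (leR_mul_right _ _) hle
  obtain ⟨w, rfl⟩ := hθ x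
  exact he ⟨w, hx.symm⟩

theorem height_edgeEnd_lt_of_lt (hθ : Function.Surjective θ) {t : WithOne S}
    {w : FreeMonoid A} {i j : ℕ} {e e' : WithOne S × A} (hij : i < j)
    (he : (transEdgesFrom θ t w.toList)[i]? = some e)
    (he' : (transEdgesFrom θ t w.toList)[j]? = some e') :
    height (edgeEnd θ e) < height (edgeEnd θ e') := by
  have hj : j < (transEdgesFrom θ t w.toList).length := (List.getElem?_eq_some_iff.1 he').1
  obtain ⟨p, q, rfl, hp, hq⟩ :=
    exists_mul_eq_transEdgesFrom_take_drop θ t w (k := i + 1) (by omega)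
  have hlast : (transEdgesFrom θ t p.toList).getLast? = some e := by
    rw [hp, List.getLast?_take, if_neg (by omega), Nat.add_sub_cancel, he, Option.some_or]
  have hmem : e' ∈ transEdgesFrom θ (t * θ p) q.toList := by
    rw [hq]
    refine List.mem_of_getElem? (i := j - (i + 1)) ?_
    rw [List.getElem?_drop, ← he']
    congr 1
    omega
  obtain ⟨htr, hsrc⟩ := isTransitionEdge_and_leR_of_mem θ hmem
  exact height_lt_height (ltJ_of_ltJ_of_leJ (ltJ_edgeEnd θ hθ htr)
    (leR_trans hsrc (leR_edgeEnd_of_getLast? θ hlast).1).leJ)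

theorem height_edgeEnd_le_of_not_isTransitionEdge {s t : WithOne S} {w : FreeMonoid A}
    {e : WithOne S × A} (he : (transEdgesFrom θ t w.toList)[0]? = some e)
    (hdie : ¬ IsTransitionEdge θ (s * e.1) e.2) :
    height (edgeEnd θ e) ≤ height (s * t) := by
  obtain ⟨p, q, rfl, hp, -⟩ := exists_mul_eq_transEdgesFrom_take_drop θ t w (k := 1)
    (List.getElem?_eq_some_iff.1 he).1
  have hpe : transEdgesFrom θ t p.toList = [e] := by
    rw [hp, List.take_one, List.head?_eq_getElem?, he]
    rfl
  have hnil : transEdgesFrom θ (s * t) p.toList = [] := by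
    simp [transEdgesFrom_mul_left, hpe, translateEdge, hdie]
  obtain ⟨hR, hR'⟩ := leR_edgeEnd_of_getLast? θ (by rw [hpe]; rfl)
  calc height (edgeEnd θ e) ≤ height (s * edgeEnd θ e) := height_le_height (leJ_mul_left _ _)
    _ = height (s * (t * θ p)) :=
      height_eq_of_leR_of_leR (leR_mul_left s hR') (leR_mul_left s hR)
    _ = height (s * t) := by
      rw [← mul_assoc]
      exact height_eq_of_leR_of_leR (leR_mul_right _ _) (leR_of_transEdgesFrom_eq_nil θ hnil)

theorem transEdgesFrom_mul_left_getElem?_zero {s t : WithOne S} {w : FreeMonoid A}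
    {e : WithOne S × A} (he : (transEdgesFrom θ t w.toList)[0]? = some e)
    (hlt : height (s * t) < height (edgeEnd θ e)) :
    (transEdgesFrom θ (s * t) w.toList)[0]? = some (s * e.1, e.2) := by
  have htr : IsTransitionEdge θ (s * e.1) e.2 := by
    by_contra hdie
    exact (height_edgeEnd_le_of_not_isTransitionEdge θ he hdie).not_gt hlt
  rcases hT : transEdgesFrom θ t w.toList with _ | ⟨e₀, L⟩
  · simp [hT] at he
  obtain rfl : e₀ = e := by simpa [hT] using he
  simp [transEdgesFrom_mul_left, hT, translateEdge, htr]

end PathHeights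

section KarnofskyRhodes

variable {A S : Type*} [Semigroup S] (θ : FreeMonoid A →* WithOne S)

theorem transEdges_mul (u v : FreeMonoid A) :
    transEdges θ (u * v) = transEdges θ u ++ transEdgesFrom θ (θ u) v.toList := by
  rw [transEdges, transEdgesFrom_mul, one_mul]
  rfl

theorem transEdgesFrom_eq_filterMap (s : WithOne S) (w : FreeMonoid A) :
    transEdgesFrom θ s w.toList = (transEdges θ w).filterMap (translateEdge θ s) := by
  rw [transEdges, ← transEdgesFrom_mul_left, mul_one]

theorem transEdges_mul_ne_nil (u : FreeMonoid A) {v : FreeMonoid A} (hv : transEdges θ v ≠ []) :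
    transEdges θ (u * v) ≠ [] := by
  rw [transEdges_mul]
  intro h
  obtain ⟨hu, huv⟩ := List.append_eq_nil_iff.1 h
  obtain ⟨x, hx⟩ := leR_of_transEdgesFrom_eq_nil θ hu
  rw [one_mul, eq_comm] at hx
  rw [(withOne_mul_eq_one hx).1] at huv
  exact hv huv

theorem exists_mul_eq_transEdges_take (v : FreeMonoid A) {k : ℕ}
    (hk : k ≤ (transEdges θ v).length) :
    ∃ p q : FreeMonoid A, v = p * q ∧ transEdges θ p = (transEdges θ v).take k :=
  let ⟨p, q, hv, hp, _⟩ := exists_mul_eq_transEdgesFrom_take_drop θ 1 v hk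
  ⟨p, q, hv, hp⟩

theorem transEdges_mul_left_congr (u : FreeMonoid A) {p p' : FreeMonoid A}
    (h : transEdges θ p' = transEdges θ p) : transEdges θ (u * p') = transEdges θ (u * p) := by
  rw [transEdges_mul, transEdges_mul, transEdgesFrom_eq_filterMap, transEdgesFrom_eq_filterMap, h]

theorem take_transEdges_mul_mul (u p q : FreeMonoid A) :
    (transEdges θ (u * (p * q))).take (transEdges θ (u * p)).length = transEdges θ (u * p) := by
  rw [← mul_assoc, transEdges_mul θ (u * p) q, List.take_left]

theorem getElem?_transEdges_mul_mul_length_sub_one (u p q : FreeMonoid A)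
    (hup : transEdges θ (u * p) ≠ []) :
    (transEdges θ (u * (p * q)))[(transEdges θ (u * p)).length - 1]? =
      (transEdges θ (u * p)).getLast? := by
  rw [← mul_assoc, transEdges_mul θ (u * p) q, List.getElem?_append_left
    (Nat.sub_lt (List.length_pos_iff.2 hup) one_pos), List.getLast?_eq_getElem?]

theorem KRrel_refl (u : FreeMonoid A) : KRrel θ u u := by
  by_cases hu : u = 1
  · exact Or.inl ⟨hu, hu⟩
  · exact Or.inr ⟨hu, hu, rfl, rfl⟩

theorem KRrel_symm {u v : FreeMonoid A} (h : KRrel θ u v) : KRrel θ v u := by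
  rcases h with ⟨hu, hv⟩ | ⟨hu, hv, hθ, hT⟩
  · exact Or.inl ⟨hv, hu⟩
  · exact Or.inr ⟨hv, hu, hθ.symm, hT.symm⟩

theorem KRrel_trans {u v w : FreeMonoid A} (huv : KRrel θ u v) (hvw : KRrel θ v w) :
    KRrel θ u w := by
  rcases huv with ⟨hu, hv⟩ | ⟨hu, hv, hθ, hT⟩ <;>
    rcases hvw with ⟨hv', hw⟩ | ⟨hv', hw, hθ', hT'⟩
  · exact Or.inl ⟨hu, hw⟩
  · exact absurd hv hv'
  · exact absurd hv' hv
  · exact Or.inr ⟨hu, hw, hθ.trans hθ', hT.trans hT'⟩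

theorem KRrel.mul_right {u v : FreeMonoid A} (h : KRrel θ u v) (w : FreeMonoid A) :
    KRrel θ (u * w) (v * w) := by
  rcases h with ⟨rfl, rfl⟩ | ⟨hu, hv, hθ, hT⟩
  · exact KRrel_refl θ _
  · refine Or.inr ⟨fun h => hu (mul_eq_one'.1 h).1, fun h => hv (mul_eq_one'.1 h).1, ?_, ?_⟩
    · rw [map_mul, map_mul, hθ]
    · rw [transEdges_mul, transEdges_mul, hθ, hT]

theorem KRrel.mul_left {v w : FreeMonoid A} (h : KRrel θ v w) (u : FreeMonoid A) :
    KRrel θ (u * v) (u * w) := by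
  rcases h with ⟨rfl, rfl⟩ | ⟨hv, hw, hθ, hT⟩
  · exact KRrel_refl θ _
  · refine Or.inr ⟨fun h => hv (mul_eq_one'.1 h).2, fun h => hw (mul_eq_one'.1 h).2, ?_, ?_⟩
    · rw [map_mul, map_mul, hθ]
    · rw [transEdges_mul, transEdges_mul, transEdgesFrom_eq_filterMap,
        transEdgesFrom_eq_filterMap, hT]

theorem xi_spec (u v : FreeMonoid A) :
    xi θ u v ≤ (transEdges θ u).length ∧
      (transEdges θ u).take (xi θ u v) = (transEdges θ v).take (xi θ u v) :=
  Nat.sSup_mem (s := {i | i ≤ (transEdges θ u).length ∧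
    (transEdges θ u).take i = (transEdges θ v).take i}) ⟨0, by simp⟩ ⟨_, fun _ h => h.1⟩

theorem le_xi {u v : FreeMonoid A} {k : ℕ} (hk : k ≤ (transEdges θ u).length)
    (htake : (transEdges θ u).take k = (transEdges θ v).take k) : k ≤ xi θ u v :=
  le_csSup ⟨_, fun _ h => h.1⟩ ⟨hk, htake⟩

theorem xi_le_length_right (u v : FreeMonoid A) : xi θ u v ≤ (transEdges θ v).length := by
  have h := congrArg List.length (xi_spec θ u v).2
  rw [List.length_take, List.length_take, min_eq_left (xi_spec θ u v).1] at h
  omega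

theorem exists_getElem?_xi_sub_one {u v : FreeMonoid A} (hxi : xi θ u v ≠ 0) :
    ∃ e, (transEdges θ u)[xi θ u v - 1]? = some e :=
  ⟨_, List.getElem?_eq_getElem (by have := (xi_spec θ u v).1; omega)⟩

/-- List index `i` holds the paper's `E_{i+1}` and `E'_{i+1}`. -/
def SameEdgeEndAt (u v : FreeMonoid A) (i : ℕ) : Prop :=
  ∃ e e', (transEdges θ u)[i]? = some e ∧ (transEdges θ v)[i]? = some e' ∧
    edgeEnd θ e = edgeEnd θ e'

theorem lcD_of_KRrel {u v : FreeMonoid A} (h : KRrel θ u v) : lcD θ u v = ell S := if_pos h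

theorem lcD_eq_of_getElem? {u v : FreeMonoid A} {e : WithOne S × A} (huv : ¬ KRrel θ u v)
    (hxi : xi θ u v ≠ 0) (he : (transEdges θ u)[xi θ u v - 1]? = some e) :
    lcD θ u v = if SameEdgeEndAt θ u v (xi θ u v) then 2 * height (edgeEnd θ e)
      else 2 * height (edgeEnd θ e) - 1 := by
  simp only [lcD, if_neg huv, if_neg hxi, he, Option.elim]
  rfl

end KarnofskyRhodes

section LengthFunction

variable {A S : Type*} [Semigroup S] [Finite S] (θ : FreeMonoid A →* WithOne S)

theorem two_mul_height_le_ell (x : WithOne S) : 2 * height x ≤ ell S := by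
  refine Nat.mul_le_mul_left 2 (le_csSup ⟨Nat.card (WithOne S), ?_⟩ ⟨x, rfl⟩)
  rintro _ ⟨y, rfl⟩
  exact (height_lt_card y).le

theorem one_le_height_edgeEnd (hletter : ∀ a : A, θ (of a) ≠ 1) (e : WithOne S × A) :
    1 ≤ height (edgeEnd θ e) :=
  one_le_height fun h => hletter e.2 (withOne_mul_eq_one h).2

theorem height_edgeEnd_eq_of_getLast? {w : FreeMonoid A} {e : WithOne S × A}
    (h : (transEdges θ w).getLast? = some e) : height (edgeEnd θ e) = height (θ w) := by
  obtain ⟨h₁, h₂⟩ := leR_edgeEnd_of_getLast? θ h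
  rw [one_mul] at h₁ h₂
  exact height_eq_of_leR_of_leR h₂ h₁

theorem getElem?_transEdges_mul_mul_length (u : FreeMonoid A) {p q : FreeMonoid A}
    {e : WithOne S × A} (he : (transEdges θ (p * q))[(transEdges θ p).length]? = some e)
    (hlt : height (θ (u * p)) < height (edgeEnd θ e)) :
    (transEdges θ (u * (p * q)))[(transEdges θ (u * p)).length]? = some (θ u * e.1, e.2) := by
  rw [transEdges_mul, List.getElem?_append_right le_rfl, Nat.sub_self] at he
  rw [← mul_assoc, transEdges_mul, List.getElem?_append_right le_rfl, Nat.sub_self, map_mul]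
  rw [map_mul] at hlt
  exact transEdgesFrom_mul_left_getElem?_zero θ he hlt

theorem height_eq_of_transEdges_eq {x y : FreeMonoid A} (h : transEdges θ x = transEdges θ y)
    (hx : transEdges θ x ≠ []) : height (θ x) = height (θ y) := by
  obtain ⟨r, hr⟩ : ∃ r, (transEdges θ x).getLast? = some r :=
    ⟨_, List.getLast?_eq_some_getLast hx⟩
  rw [← height_edgeEnd_eq_of_getLast? θ hr, ← height_edgeEnd_eq_of_getLast? θ (h ▸ hr)]

theorem sameEdgeEndAt_mul_left (u : FreeMonoid A) {p q p' q' : FreeMonoid A}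
    {e₁ e₁' : WithOne S × A} (hpp' : transEdges θ p' = transEdges θ p)
    (hpne : transEdges θ p ≠ []) (he₁ : (transEdges θ (p * q))[(transEdges θ p).length]? = some e₁)
    (he₁' : (transEdges θ (p' * q'))[(transEdges θ p).length]? = some e₁')
    (hend : edgeEnd θ e₁ = edgeEnd θ e₁') (hlt : height (θ (u * p)) < height (edgeEnd θ e₁)) :
    SameEdgeEndAt θ (u * (p * q)) (u * (p' * q')) (transEdges θ (u * p)).length := by
  have hup' := transEdges_mul_left_congr θ u hpp'
  have hh : height (θ (u * p')) = height (θ (u * p)) :=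
    height_eq_of_transEdges_eq θ hup' (hup' ▸ transEdges_mul_ne_nil θ u hpne)
  rw [← hpp'] at he₁'
  have hw₁ := getElem?_transEdges_mul_mul_length θ u he₁' (by rw [hh, ← hend]; exact hlt)
  rw [hup'] at hw₁
  exact ⟨_, _, getElem?_transEdges_mul_mul_length θ u he₁ hlt, hw₁,
    by rw [edgeEnd_mul_left, edgeEnd_mul_left, hend]⟩

theorem le_lcD_of_take_eq (hθ : Function.Surjective θ) {x y : FreeMonoid A} {M : ℕ}
    {r : WithOne S × A} (hM : 0 < M) (hr : (transEdges θ x)[M - 1]? = some r)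
    (htake : (transEdges θ x).take M = (transEdges θ y).take M) :
    2 * height (edgeEnd θ r) - 1 ≤ lcD θ x y ∧
      (SameEdgeEndAt θ x y M → 2 * height (edgeEnd θ r) ≤ lcD θ x y) := by
  by_cases hxy : KRrel θ x y
  · rw [lcD_of_KRrel θ hxy]
    have := two_mul_height_le_ell (edgeEnd θ r)
    omega
  have hMxi : M ≤ xi θ x y :=
    le_xi θ (by have := (List.getElem?_eq_some_iff.1 hr).1; omega) htake
  obtain ⟨e, he⟩ := exists_getElem?_xi_sub_one θ (u := x) (v := y) (by omega)
  rw [lcD_eq_of_getElem? θ hxy (by omega) he]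
  rcases hMxi.eq_or_lt with hxi | hxi
  · rw [← hxi] at he ⊢
    obtain rfl : e = r := Option.some_inj.1 (he.symm.trans hr)
    split_ifs with hnext
    · exact ⟨by omega, fun _ => le_rfl⟩
    · exact ⟨le_rfl, fun h => absurd h hnext⟩
  · have := height_edgeEnd_lt_of_lt θ hθ (by omega : M - 1 < xi θ x y - 1) hr he
    split_ifs <;> omega

theorem lcD_lt_ell (hθ : Function.Surjective θ) (hletter : ∀ a : A, θ (of a) ≠ 1)
    {u v : FreeMonoid A} (huv : ¬ KRrel θ u v) : lcD θ u v < ell S := by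
  by_cases hxi : xi θ u v = 0
  · have : Nonempty A := by
      by_contra hA
      rw [not_nonempty_iff] at hA
      exact huv (Or.inl ⟨Subsingleton.elim _ _, Subsingleton.elim _ _⟩)
    have := one_le_height_edgeEnd θ hletter (1, Classical.arbitrary A)
    have := two_mul_height_le_ell (edgeEnd θ (1, Classical.arbitrary A))
    simp only [lcD, if_neg huv, if_pos hxi]
    omega
  obtain ⟨e, he⟩ := exists_getElem?_xi_sub_one θ hxi
  rw [lcD_eq_of_getElem? θ huv hxi he]
  have := one_le_height_edgeEnd θ hletter e
  have := two_mul_height_le_ell (edgeEnd θ e)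
  split_ifs with hnext
  · obtain ⟨e₁, -, he₁, -, -⟩ := hnext
    have := height_edgeEnd_lt_of_lt θ hθ (by omega : xi θ u v - 1 < xi θ u v) he he₁
    have := two_mul_height_le_ell (edgeEnd θ e₁)
    omega
  · omega

theorem lcD_le_lcD_mul_left (hθ : Function.Surjective θ) (u v w : FreeMonoid A) :
    lcD θ v w ≤ lcD θ (u * v) (u * w) := by
  by_cases hvw : KRrel θ v w
  · rw [lcD_of_KRrel θ hvw, lcD_of_KRrel θ (hvw.mul_left θ u)]
  by_cases hxi : xi θ v w = 0
  · simp only [lcD, if_neg hvw, if_pos hxi, Nat.zero_le]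
  obtain ⟨e₀, he₀⟩ := exists_getElem?_xi_sub_one θ hxi
  rw [lcD_eq_of_getElem? θ hvw hxi he₀]
  obtain ⟨p, q, rfl, hp⟩ := exists_mul_eq_transEdges_take θ v (xi_spec θ v w).1
  obtain ⟨p', q', rfl, hp'⟩ := exists_mul_eq_transEdges_take θ w (xi_le_length_right θ _ w)
  have hplen : (transEdges θ p).length = xi θ (p * q) (p' * q') := by
    rw [hp, List.length_take, min_eq_left (xi_spec θ _ _).1]
  have hpp' : transEdges θ p' = transEdges θ p := hp'.trans ((xi_spec θ _ _).2.symm.trans hp.symm)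
  have hpne : transEdges θ p ≠ [] := List.ne_nil_of_length_pos (by omega)
  have hupne := transEdges_mul_ne_nil θ u hpne
  obtain ⟨r, hr⟩ : ∃ r, (transEdges θ (u * p)).getLast? = some r :=
    ⟨_, List.getLast?_eq_some_getLast hupne⟩
  have he₀p : height (edgeEnd θ e₀) = height (θ p) := height_edgeEnd_eq_of_getLast? θ <| by
    rw [hp, List.getLast?_take, if_neg hxi, he₀, Option.some_or]
  have hre₀ : height (edgeEnd θ e₀) ≤ height (edgeEnd θ r) := by
    rw [height_edgeEnd_eq_of_getLast? θ hr, map_mul, he₀p]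
    exact height_le_height (leJ_mul_left _ _)
  have hpre := le_lcD_of_take_eq θ hθ (x := u * (p * q)) (y := u * (p' * q'))
    (List.length_pos_iff.2 hupne)
    (by rw [getElem?_transEdges_mul_mul_length_sub_one θ u p q hupne, hr])
    (by rw [take_transEdges_mul_mul, ← transEdges_mul_left_congr θ u hpp', take_transEdges_mul_mul])
  split_ifs with hnext
  swap
  · omega
  obtain ⟨e₁, e₁', he₁, he₁', hend⟩ := hnext
  rcases hre₀.lt_or_eq with hlt | heq
  · omega
  refine le_trans (by omega) (hpre.2 (sameEdgeEndAt_mul_left θ u hpp' hpne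
    (by rw [hplen]; exact he₁) (by rw [hplen]; exact he₁') hend ?_))
  -- `θ u` does not lower the `J`-class at the end of the common prefix, so the next transition
  -- edges of `p q` and `p' q'` survive translation by `θ u`.
  rw [← height_edgeEnd_eq_of_getLast? θ hr, ← heq]
  exact height_edgeEnd_lt_of_lt θ hθ (by omega) he₀ he₁

end LengthFunction

section ChiswellTree

variable {A S : Type*} [Semigroup S] (θ : FreeMonoid A →* WithOne S)

theorem CGraph_adj_of_edgeRel {v w : CVert θ} (h : edgeRel θ v w) : (CGraph θ).Adj v w := by
  refine (SimpleGraph.fromRel_adj _ _ _).2 ⟨fun hvw => ?_, Or.inl h⟩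
  obtain ⟨k, γ, hk, rfl, rfl⟩ := h
  exact absurd (congrArg (depth θ) hvw) k.succ_ne_self.symm

variable [Finite S]

def leftMul (α : FreeMonoid A) (p : {p : ℕ × FreeMonoid A // p.1 ≤ ell S}) :
    {p : ℕ × FreeMonoid A // p.1 ≤ ell S} :=
  ⟨(p.1.1, α * p.1.2), p.2⟩

theorem simRel_leftMul (hθ : Function.Surjective θ) (α : FreeMonoid A)
    {p q : {p : ℕ × FreeMonoid A // p.1 ≤ ell S}} (h : simRel θ p q) :
    simRel θ (leftMul α p) (leftMul α q) :=
  ⟨h.1, h.2.trans (lcD_le_lcD_mul_left θ hθ α _ _)⟩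

/-- The paper's `ε_α`. -/
def leftAction (hθ : Function.Surjective θ) (α : FreeMonoid A) : CVert θ → CVert θ :=
  Quot.map (leftMul α) fun _ _ => simRel_leftMul θ hθ α

theorem leftAction_congr (hθ : Function.Surjective θ) {α α' : FreeMonoid A}
    (h : KRrel θ α α') : leftAction θ hθ α = leftAction θ hθ α' := by
  funext v
  induction v using Quot.ind with
  | mk p => exact Quot.sound ⟨rfl, (lcD_of_KRrel θ (h.mul_right θ p.1.2)).symm ▸ p.2⟩

theorem depth_leftAction (hθ : Function.Surjective θ) (α : FreeMonoid A) (v : CVert θ) :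
    depth θ (leftAction θ hθ α v) = depth θ v := by
  induction v using Quot.ind
  rfl

theorem leftAction_mul (hθ : Function.Surjective θ) (α α' : FreeMonoid A) :
    leftAction θ hθ (α * α') = leftAction θ hθ α ∘ leftAction θ hθ α' := by
  funext v
  induction v using Quot.ind with
  | mk p => exact congrArg (Quot.mk _) (Subtype.ext (Prod.ext rfl (mul_assoc α α' p.1.2)))

theorem leftAction_one (hθ : Function.Surjective θ) : leftAction θ hθ 1 = id := by
  funext v
  induction v using Quot.ind with
  | mk p => exact congrArg (Quot.mk _) (Subtype.ext (Prod.ext rfl (one_mul p.1.2)))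

theorem edgeRel_leftAction (hθ : Function.Surjective θ) (α : FreeMonoid A) {v w : CVert θ}
    (h : edgeRel θ v w) : edgeRel θ (leftAction θ hθ α v) (leftAction θ hθ α w) := by
  obtain ⟨k, γ, hk, rfl, rfl⟩ := h
  exact ⟨k, α * γ, hk, rfl, rfl⟩

theorem CGraph_adj_leftAction (hθ : Function.Surjective θ) (α : FreeMonoid A) {v w : CVert θ}
    (h : (CGraph θ).Adj v w) :
    (CGraph θ).Adj (leftAction θ hθ α v) (leftAction θ hθ α w) := by
  rcases ((SimpleGraph.fromRel_adj _ _ _).1 h).2 with h | h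
  · exact CGraph_adj_of_edgeRel θ (edgeRel_leftAction θ hθ α h)
  · exact (CGraph_adj_of_edgeRel θ (edgeRel_leftAction θ hθ α h)).symm

theorem KRrel_of_eqvGen_simRel (hθ : Function.Surjective θ) (hletter : ∀ a : A, θ (of a) ≠ 1)
    {p q : {p : ℕ × FreeMonoid A // p.1 ≤ ell S}} (h : Relation.EqvGen (simRel θ) p q) :
    p.1.1 = q.1.1 ∧ (p.1.1 = ell S → KRrel θ p.1.2 q.1.2) := by
  induction h with
  | rel p q h =>
    refine ⟨h.1, fun hp => ?_⟩
    by_contra hpq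
    have := h.2
    rw [hp] at this
    exact (lcD_lt_ell θ hθ hletter hpq).not_ge this
  | refl p => exact ⟨rfl, fun _ => KRrel_refl θ _⟩
  | symm p q _ ih => exact ⟨ih.1.symm, fun hq => KRrel_symm θ (ih.2 (ih.1.trans hq))⟩
  | trans p q r _ _ ih₁ ih₂ =>
    refine ⟨ih₁.1.trans ih₂.1, fun hp => KRrel_trans θ (ih₁.2 hp) (ih₂.2 ?_)⟩
    exact ih₁.1 ▸ hp

theorem KRrel_of_leftAction_eq (hθ : Function.Surjective θ) (hletter : ∀ a : A, θ (of a) ≠ 1)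
    {α α' : FreeMonoid A} (h : leftAction θ hθ α = leftAction θ hθ α') : KRrel θ α α' := by
  have hbottom : Quot.mk (simRel θ) ⟨(ell S, α * 1), le_rfl⟩ =
      Quot.mk (simRel θ) ⟨(ell S, α' * 1), le_rfl⟩ :=
    congrFun h (Quot.mk _ ⟨(ell S, 1), le_rfl⟩)
  simpa using (KRrel_of_eqvGen_simRel θ hθ hletter (Quot.eqvGen_exact hbottom)).2 rfl

end ChiswellTree

end KRHolonomy

open KRHolonomy in
theorem holonomy_left_action_general {A S : Type*} [Semigroup S] [Finite S]
    (θ : FreeMonoid A →* WithOne S)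
    (hgen : ∀ s : S, ∃ u : FreeMonoid A, θ u = (s : WithOne S))
    (hproper : ∀ u : FreeMonoid A, θ u = 1 → u = 1) :
    ∃ ε : FreeMonoid A → CVert θ → CVert θ,
      (∀ (α β : FreeMonoid A) (k : ℕ) (hk : k ≤ ell S),
          ε α (Quot.mk (simRel θ) ⟨(k, β), hk⟩) = Quot.mk (simRel θ) ⟨(k, α * β), hk⟩) ∧
      (∀ α α' : FreeMonoid A, KRrel θ α α' → ε α = ε α') ∧
      (∀ (α : FreeMonoid A) (v : CVert θ), depth θ (ε α v) = depth θ v) ∧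
      (∀ (α : FreeMonoid A) (v w : CVert θ),
          (CGraph θ).Adj v w → (CGraph θ).Adj (ε α v) (ε α w)) ∧
      (∀ α α' : FreeMonoid A, ε (α * α') = ε α ∘ ε α') ∧
      ε 1 = id ∧
      (∀ α α' : FreeMonoid A, ε α = ε α' → KRrel θ α α') := by
  have hθ : Function.Surjective θ := by
    intro x
    induction x using WithOne.recOneCoe with
    | one => exact ⟨1, map_one θ⟩
    | coe s => exact hgen s
  have hletter : ∀ a : A, θ (FreeMonoid.of a) ≠ 1 := fun a h =>
    FreeMonoid.of_ne_one a (hproper _ h)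
  exact ⟨leftAction θ hθ, fun _ _ _ _ => rfl, fun _ _ => leftAction_congr θ hθ,
    depth_leftAction θ hθ, fun α _ _ => CGraph_adj_leftAction θ hθ α, leftAction_mul θ hθ,
    leftAction_one θ hθ, fun _ _ => KRrel_of_leftAction_eq θ hθ hletter⟩

open KRHolonomy in
/-- **Holonomy Theorem, left action.** There is a map `ε` sending
`α ∈ T¹ = KR_right(S,A)¹` to the map `ε_α` on the vertices of the Chiswell tree `𝒞` with
`ε_α([k,β]) = [k,αβ]`; it is well defined (independent of representatives, both of the pair
`(k,β)` and of `α`), each `ε_α` is an elliptic map of `(𝒞,[0,1])` (it preserves the depth of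
every vertex and maps edges to edges), `ε` is a monoid homomorphism (`ε_{αα'} = ε_α ∘ ε_{α'}`
and `ε_1 = id`), and `ε` is injective.  Hence `KR¹_right(S,A)` is faithfully represented as
elliptic maps on a finite rooted tree. -/
theorem holonomy_left_action {A S : Type*} [Finite A] [Semigroup S] [Finite S]
    (θ : FreeMonoid A →* WithOne S)
    (hgen : ∀ s : S, ∃ u : FreeMonoid A, θ u = (s : WithOne S))
    (hproper : ∀ u : FreeMonoid A, θ u = 1 → u = 1) :
    ∃ ε : FreeMonoid A → CVert θ → CVert θ,
      (∀ (α β : FreeMonoid A) (k : ℕ) (hk : k ≤ ell S),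
          ε α (Quot.mk (simRel θ) ⟨(k, β), hk⟩) = Quot.mk (simRel θ) ⟨(k, α * β), hk⟩) ∧
      (∀ α α' : FreeMonoid A, KRrel θ α α' → ε α = ε α') ∧
      (∀ (α : FreeMonoid A) (v : CVert θ), depth θ (ε α v) = depth θ v) ∧
      (∀ (α : FreeMonoid A) (v w : CVert θ),
          (CGraph θ).Adj v w → (CGraph θ).Adj (ε α v) (ε α w)) ∧
      (∀ α α' : FreeMonoid A, ε (α * α') = ε α ∘ ε α') ∧
      ε 1 = id ∧
      (∀ α α' : FreeMonoid A, ε α = ε α' → KRrel θ α α') :=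
  holonomy_left_action_general θ hgen hproper
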